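/- arXiv:2102.11641 — 2 statements merged into one kernel-verified Lean document; each statement's English description precedes it below -/
import Mathlib

section
/- In a bounded lattice with residuated pairs ◆ ⊣ □ and ◇ ⊣ ■, the sequent ◇□p ≤ □◇p is valid for all p iff the quantified condition ∀x ∀w (◇◆x ≤ w → ◇x ≤ □w) holds. -/
theorem stmt_14 {L : Type*} [Lattice L] [BoundedOrder L]
    (dia box bdia bbox : L → L)
    (hadj1 : ∀ a b : L, bdia a ≤ b ↔ a ≤ box b)
    (hadj2 : ∀ a b : L, dia a ≤ b ↔ a ≤ bbox b) :
    (∀ p : L, dia (box p) ≤ box (dia p)) ↔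
      (∀ x w : L, dia (bdia x) ≤ w → dia x ≤ box w) := by
  have diamono : ∀ a b : L, a ≤ b → dia a ≤ dia b := fun a b h =>
    (hadj2 a (dia b)).mpr (le_trans h ((hadj2 b (dia b)).mp le_rfl))
  have boxmono : ∀ a b : L, a ≤ b → box a ≤ box b := fun a b h =>
    (hadj1 (box a) b).mp (le_trans ((hadj1 (box a) a).mpr le_rfl) h)
  constructor
  · intro H x w hxw
    calc dia x ≤ dia (box (bdia x)) := diamono _ _ ((hadj1 x (bdia x)).mp le_rfl)
    _ ≤ box (dia (bdia x)) := H _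
    _ ≤ box w := boxmono _ _ hxw
  · intro H p
    exact H (box p) (dia p) (diamono _ _ ((hadj1 (box p) p).mpr le_rfl))
end

section
/- In a distributive lattice with monotone unary operations □ and ◇ such that □ preserves binary meets and ◇ preserves binary joins, if the rule 'z ≤ □y and ◇x ≤ w imply x ∧ z ≤ y ∨ w' holds for all x, y, z, w, then the axiom p ∧ □q ≤ q ∨ ◇p holds for all p, q; conversely the axiom implies the rule. -/
theorem stmt_17 {L : Type*} [DistribLattice L]
    (box dia : L → L) (hbm : Monotone box) (hdm : Monotone dia)
    (hbox : ∀ a b : L, box (a ⊓ b) = box a ⊓ box b)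
    (hdia : ∀ a b : L, dia (a ⊔ b) = dia a ⊔ dia b) :
    ((∀ x y z w : L, z ≤ box y → dia x ≤ w → x ⊓ z ≤ y ⊔ w) →
      ∀ p q : L, p ⊓ box q ≤ q ⊔ dia p) ∧
    ((∀ p q : L, p ⊓ box q ≤ q ⊔ dia p) →
      ∀ x y z w : L, z ≤ box y → dia x ≤ w → x ⊓ z ≤ y ⊔ w) := by
  constructor
  · intro h p q
    exact h p q (box q) (dia p) le_rfl le_rfl
  · intro h x y z w hz hw
    calc x ⊓ z ≤ x ⊓ box y := inf_le_inf_left x hz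
      _ ≤ y ⊔ dia x := h x y
      _ ≤ y ⊔ w := sup_le_sup_left hw y
end
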